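/- Let A be a real d×d matrix with nonnegative entries. Then ρ(A) = 0 if and only if tr(exp(A)) = d. -/

import Mathlib

open Matrix

noncomputable def specRad {d : ℕ} (A : Matrix (Fin d) (Fin d) ℂ) : ℝ :=
  sSup {r : ℝ | ∃ μ ∈ spectrum ℂ A, r = ‖μ‖}

/-!
Both sides are equivalent to nilpotency of `A`. On the spectral side, `ρ(A) = 0` means that the
spectrum of `A` is `{0}`, which over `ℂ` is nilpotency. On the exponential side,
`tr (exp A) = d + ∑_{k ≥ 1} tr (A ^ k) / k!` is a series of nonnegative terms, so
`tr (exp A) = d` means `tr (A ^ k) = 0` for every `k ≥ 1`. For a nonnegative matrix,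
`(A ^ k) i i > 0` exactly when the digraph of positive entries of `A` has a closed walk of
length `k` through `i`; so vanishing traces make this digraph acyclic, every walk in it has
fewer than `d` edges, and hence `A ^ d = 0`.
-/

open Finset Polynomial NormedSpace

theorem Quiver.Path.vertices_nodup_of_forall_length_eq_zero {V : Type*} [Quiver V]
    (hV : ∀ (v : V) (c : Path v v), c.length = 0) {a b : V} (p : Path a b) :
    p.vertices.Nodup := by
  induction p with
  | nil => simp
  | @cons b c p e ih =>
    rw [vertices_cons, List.concat_eq_append, List.nodup_append]
    refine ⟨ih, List.nodup_singleton c, fun x hx y hy hxy => ?_⟩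
    rw [List.mem_singleton] at hy
    subst hxy hy
    obtain ⟨-, p₂, -⟩ := p.exists_eq_comp_of_mem_vertices hx
    simpa using hV x (p₂.cons e)

theorem spectrum.subset_singleton_zero_of_isNilpotent {K A : Type*} [Field K] [Ring A]
    [Algebra K A] {a : A} (ha : IsNilpotent a) : spectrum K a ⊆ {0} := by
  intro μ hμ
  by_contra hμ0
  refine hμ (spectrum.mem_resolventSet_iff.mpr ?_)
  simpa [sub_eq_add_neg] using ha.neg.isUnit_add_left_of_commute
    ((Ne.isUnit hμ0).map (algebraMap K A)) (Algebra.commutes μ (-a)).symm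

namespace Matrix

variable {n : Type*} [Fintype n] [DecidableEq n]

theorem trace_pow_nonneg {R : Type*} [Semiring R] [PartialOrder R] [IsOrderedRing R]
    {A : Matrix n n R} (hA : ∀ i j, 0 ≤ A i j) (k : ℕ) : 0 ≤ (A ^ k).trace :=
  sum_nonneg fun i _ => pow_apply_nonneg hA k i i

theorem pow_card_eq_zero_of_trace_pow_eq_zero {R : Type*} [Ring R] [LinearOrder R]
    [IsStrictOrderedRing R] {A : Matrix n n R} (hA : ∀ i j, 0 ≤ A i j)
    (htr : ∀ k, 0 < k → (A ^ k).trace = 0) : A ^ Fintype.card n = 0 := by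
  let := toQuiver A
  have hacyclic : ∀ (v : n) (c : Quiver.Path v v), c.length = 0 := by
    intro v c
    by_contra hc
    have hpos := (pow_apply_pos_iff_nonempty_path hA c.length v v).mpr ⟨⟨c, rfl⟩⟩
    have hle : (A ^ c.length) v v ≤ (A ^ c.length).trace :=
      single_le_sum (fun l _ => pow_apply_nonneg hA _ l l) (mem_univ v)
    rw [htr _ (Nat.pos_of_ne_zero hc)] at hle
    exact hle.not_gt hpos
  ext i j
  refine le_antisymm (not_lt.mp fun hpos => ?_) (pow_apply_nonneg hA _ i j)
  obtain ⟨⟨p, hp⟩⟩ := (pow_apply_pos_iff_nonempty_path hA _ i j).mp hpos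
  have := (p.vertices_nodup_of_forall_length_eq_zero hacyclic).length_le_card
  simp [hp] at this

theorem isNilpotent_iff_forall_trace_pow_eq_zero {R : Type*} [CommRing R] [LinearOrder R]
    [IsStrictOrderedRing R] {A : Matrix n n R} (hA : ∀ i j, 0 ≤ A i j) :
    IsNilpotent A ↔ ∀ k, 0 < k → (A ^ k).trace = 0 := by
  refine ⟨fun ⟨m, hm⟩ k hk => ?_,
    fun htr => ⟨_, pow_card_eq_zero_of_trace_pow_eq_zero hA htr⟩⟩
  refine (isNilpotent_trace_of_isNilpotent ⟨m, ?_⟩).eq_zero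
  rw [← pow_mul, mul_comm, pow_mul, hm, zero_pow hk.ne']

theorem hasSum_trace_exp {𝕂 : Type*} [RCLike 𝕂] (A : Matrix n n 𝕂) :
    HasSum (fun k => (k.factorial : 𝕂)⁻¹ * (A ^ k).trace) (exp A).trace := by
  -- `exp A` does not depend on a norm; the operator norm only makes the series converge.
  open scoped Norms.Operator in
  have := (exp_series_hasSum_exp' (𝕂 := 𝕂) A).mapL
    (traceLinearMap n 𝕂 𝕂).toContinuousLinearMap
  simp only [LinearMap.coe_toContinuousLinearMap', traceLinearMap_apply, trace_smul,
    smul_eq_mul] at this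
  exact this

theorem trace_exp_eq_card_iff {A : Matrix n n ℝ} (hA : ∀ i j, 0 ≤ A i j) :
    (exp A).trace = Fintype.card n ↔ ∀ k, 0 < k → (A ^ k).trace = 0 := by
  set g : ℕ → ℝ := fun k => ((k + 1).factorial : ℝ)⁻¹ * (A ^ (k + 1)).trace
  have htail : HasSum g ((exp A).trace - Fintype.card n) := by
    simpa using (hasSum_nat_add_iff' 1).mpr (hasSum_trace_exp A)
  have hg : ∀ k, 0 ≤ g k := fun k => mul_nonneg (by positivity) (trace_pow_nonneg hA _)
  calc (exp A).trace = Fintype.card n ↔ HasSum g 0 := by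
        rw [← sub_eq_zero]; exact ⟨fun h => h ▸ htail, htail.unique⟩
    _ ↔ ∀ k, g k = 0 := by rw [hasSum_zero_iff_of_nonneg hg, funext_iff]; rfl
    _ ↔ ∀ k, 0 < k → (A ^ k).trace = 0 := by
      simp only [g, mul_eq_zero, inv_eq_zero, Nat.cast_eq_zero, Nat.factorial_ne_zero, false_or]
      exact ⟨fun h k hk => by simpa [Nat.sub_add_cancel hk] using h (k - 1),
        fun h k => h _ k.succ_pos⟩

theorem isNilpotent_of_spectrum_subset_singleton_zero {K : Type*} [Field K] [IsAlgClosed K]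
    {B : Matrix n n K} (hB : spectrum K B ⊆ {0}) : IsNilpotent B := by
  have hroots : B.charpoly.roots = Multiset.replicate B.charpoly.roots.card 0 :=
    Multiset.eq_replicate_of_mem fun μ hμ =>
      hB (mem_spectrum_iff_isRoot_charpoly.mpr (isRoot_of_mem_roots hμ))
  have hcharpoly : B.charpoly = X ^ B.charpoly.roots.card := by
    conv_lhs =>
      rw [(IsAlgClosed.splits B.charpoly).eq_prod_roots_of_monic B.charpoly_monic, hroots]
    simp
  refine ⟨B.charpoly.roots.card, ?_⟩
  have := B.aeval_self_charpoly
  rwa [hcharpoly, map_pow, aeval_X] at this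

theorem isNilpotent_iff_spectrum_subset_singleton_zero {K : Type*} [Field K] [IsAlgClosed K]
    {B : Matrix n n K} : IsNilpotent B ↔ spectrum K B ⊆ {0} :=
  ⟨spectrum.subset_singleton_zero_of_isNilpotent, isNilpotent_of_spectrum_subset_singleton_zero⟩

end Matrix

theorem specRad_eq_zero_iff {d : ℕ} {B : Matrix (Fin d) (Fin d) ℂ} :
    specRad B = 0 ↔ spectrum ℂ B ⊆ {0} := by
  constructor
  · intro h μ hμ
    have hfin : {r : ℝ | ∃ μ ∈ spectrum ℂ B, r = ‖μ‖}.Finite :=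
      ((finite_spectrum B).image (‖·‖)).subset fun _ ⟨μ, hμ, hr⟩ => ⟨μ, hμ, hr.symm⟩
    have hle : ‖μ‖ ≤ specRad B := le_csSup hfin.bddAbove ⟨μ, hμ, rfl⟩
    rw [h] at hle
    exact norm_le_zero_iff.mp hle
  · intro h
    refine le_antisymm (Real.sSup_nonpos ?_) (Real.sSup_nonneg ?_)
    · rintro _ ⟨μ, hμ, rfl⟩
      simp [Set.mem_singleton_iff.mp (h hμ)]
    · rintro _ ⟨μ, -, rfl⟩
      exact norm_nonneg μ

theorem specRad_zero_iff_trace_exp_eq {d : ℕ} (A : Matrix (Fin d) (Fin d) ℝ)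
    (hA : ∀ i j, 0 ≤ A i j) :
    specRad (A.map (Complex.ofReal)) = 0 ↔ (NormedSpace.exp A).trace = d := by
  have hmap : IsNilpotent (A.map Complex.ofReal) ↔ IsNilpotent A :=
    IsNilpotent.map_iff (f := Complex.ofRealHom.mapMatrix)
      (map_injective Complex.ofReal_injective)
  rw [specRad_eq_zero_iff, ← isNilpotent_iff_spectrum_subset_singleton_zero, hmap,
    isNilpotent_iff_forall_trace_pow_eq_zero hA, ← trace_exp_eq_card_iff hA, Fintype.card_fin]
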